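/- For every integer n ≥ 1 and every nonzero x ∈ ℂ, the polynomials B_n satisfy the recursion B_n(x) = 108·(x+2)·B_{n−1}(x+1) + 105·B_{n−1}(x+1)/x − 18·(n−1)·b_{n−1}/x + 18·b_{n−1}; equivalently, x·B_n(x) = 108·x·(x+2)·B_{n−1}(x+1) + 105·B_{n−1}(x+1) − 18·(n−1)·b_{n−1} + 18·x·b_{n−1} for all x ∈ ℂ. -/

import Mathlib

/-- `b_k := 2^k · (6k+1)!! / (2k)!`. -/
noncomputable def bnum (k : ℕ) : ℂ :=
  2 ^ k * ((6 * k + 1).doubleFactorial : ℂ) / ((2 * k).factorial : ℂ)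

/-- `B_n(x) := (1/6) ∑_{j=1}^n 108^j b_{n-j} (x+n)(x+n-1)⋯(x+n-j+2)`. -/
noncomputable def Bpoly (n : ℕ) (x : ℂ) : ℂ :=
  (1 / 6) * ∑ j ∈ Finset.Icc 1 n,
    108 ^ j * bnum (n - j) * ∏ i ∈ Finset.range (j - 1), (x + n - i)

/-!
Peeling off the factor `x + n` of every falling factorial gives the first-order recursion
`B_{m+1}(x) = 108 (x + m + 1) B_m(x) + 18 b_m`. Combined with the ratio
`(m + 1) b_{m+1} = 3 (6m + 5)(6m + 7) b_m`, an induction on `m` yields the shift identity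
`108 x (x + m + 1) B_m(x) = (108 x (x + 2) + 105) B_m(x + 1) - 18 m b_m`,
and substituting it into the first recursion gives the theorem.
-/

lemma succ_mul_bnum_succ (m : ℕ) :
    ((m : ℂ) + 1) * bnum (m + 1) = 3 * (6 * m + 5) * (6 * m + 7) * bnum m := by
  have hdf : (6 * (m + 1) + 1).doubleFactorial =
      (6 * m + 7) * ((6 * m + 5) * ((6 * m + 3) * (6 * m + 1).doubleFactorial)) := by
    rw [show 6 * (m + 1) + 1 = 6 * m + 1 + 2 + 2 + 2 by ring]
    simp only [Nat.doubleFactorial_add_two]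
  have hf : (2 * (m + 1)).factorial = (2 * m + 2) * ((2 * m + 1) * (2 * m).factorial) := by
    rw [show 2 * (m + 1) = 2 * m + 1 + 1 by ring, Nat.factorial_succ, Nat.factorial_succ]
  have hfac : ((2 * m).factorial : ℂ) ≠ 0 := by exact_mod_cast (2 * m).factorial_ne_zero
  have hfac' : ((2 * (m + 1)).factorial : ℂ) ≠ 0 := by
    exact_mod_cast (2 * (m + 1)).factorial_ne_zero
  unfold bnum
  rw [mul_div_assoc', mul_div_assoc', div_eq_div_iff hfac' hfac, hdf, hf]
  push_cast
  ring

lemma Bpoly_zero (x : ℂ) : Bpoly 0 x = 0 := by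
  simp [Bpoly]

lemma Bpoly_eq_sum_range (n : ℕ) (x : ℂ) :
    Bpoly n x = (1 / 6) * ∑ i ∈ Finset.range n,
      108 ^ (i + 1) * bnum (n - (i + 1)) * ∏ t ∈ Finset.range i, (x + n - t) := by
  rw [Bpoly, ← Finset.Ico_add_one_right_eq_Icc, Finset.sum_Ico_eq_sum_range,
    Nat.add_sub_cancel]
  simp only [add_comm 1, Nat.add_sub_cancel]

lemma Bpoly_succ (m : ℕ) (x : ℂ) :
    Bpoly (m + 1) x = 108 * (x + m + 1) * Bpoly m x + 18 * bnum m := by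
  have peel : ∀ i ∈ Finset.range m,
      108 ^ (i + 1 + 1) * bnum (m + 1 - (i + 1 + 1)) *
        ∏ t ∈ Finset.range (i + 1), (x + ((m + 1 : ℕ) : ℂ) - t) =
      108 * (x + m + 1) *
        (108 ^ (i + 1) * bnum (m - (i + 1)) * ∏ t ∈ Finset.range i, (x + m - t)) := by
    intro i _
    rw [Finset.prod_range_succ', Nat.add_sub_add_right]
    push_cast
    rw [Finset.prod_congr rfl fun (t : ℕ) _ =>
      show x + (m + 1) - ((t : ℂ) + 1) = x + m - t by ring]
    ring
  rw [Bpoly_eq_sum_range (m + 1), Bpoly_eq_sum_range m, Finset.sum_range_succ',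
    Finset.sum_congr rfl peel, ← Finset.mul_sum]
  simp only [zero_add, pow_one, Nat.add_sub_cancel, Finset.range_zero, Finset.prod_empty,
    mul_one]
  ring

lemma Bpoly_shift (m : ℕ) (x : ℂ) :
    108 * x * (x + m + 1) * Bpoly m x =
      108 * x * (x + 2) * Bpoly m (x + 1) + 105 * Bpoly m (x + 1) - 18 * m * bnum m := by
  induction m generalizing x with
  | zero => simp [Bpoly_zero]
  | succ m ih =>
    push_cast
    rw [Bpoly_succ m x, Bpoly_succ m (x + 1)]
    linear_combination 108 * (x + m + 2) * ih x + 18 * succ_mul_bnum_succ m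

/-- Recursion relation for the polynomials `B_n`. -/
theorem Bpoly_recursion (n : ℕ) (hn : 1 ≤ n) :
    (∀ x : ℂ, x ≠ 0 →
      Bpoly n x = 108 * (x + 2) * Bpoly (n - 1) (x + 1) +
        105 * Bpoly (n - 1) (x + 1) / x - 18 * ((n : ℂ) - 1) * bnum (n - 1) / x +
        18 * bnum (n - 1)) ∧
    (∀ x : ℂ,
      x * Bpoly n x = 108 * x * (x + 2) * Bpoly (n - 1) (x + 1) +
        105 * Bpoly (n - 1) (x + 1) - 18 * ((n : ℂ) - 1) * bnum (n - 1) +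
        18 * x * bnum (n - 1)) := by
  obtain ⟨m, rfl⟩ : ∃ m, n = m + 1 := ⟨n - 1, by omega⟩
  simp only [Nat.add_sub_cancel]
  have cleared : ∀ x : ℂ,
      x * Bpoly (m + 1) x = 108 * x * (x + 2) * Bpoly m (x + 1) +
        105 * Bpoly m (x + 1) - 18 * (((m + 1 : ℕ) : ℂ) - 1) * bnum m + 18 * x * bnum m := by
    intro x
    rw [Bpoly_succ]
    push_cast
    linear_combination Bpoly_shift m x
  refine ⟨fun x hx => ?_, cleared⟩
  field_simp
  linear_combination cleared x
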